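/- Let G be a locally compact, Hausdorff, second-countable ample étale groupoid with compact unit space G⁰, and let n ∈ ℕ. Then G has the n-filling property (for every collection U₁, …, Uₙ ⊆ G⁰ of nonempty open sets there exist compact open bisections E₁, …, Eₙ with ⋃ⱼ r(E_jU_j) = G⁰) if and only if G is n-filling in Suzuki's sense (for every nonempty open W ⊆ G⁰ there exist open bisections E₁, …, Eₙ with ⋃ᵢ r(EᵢW) = G⁰). -/

import Mathlib

open Set

/-- A (locally compact, Hausdorff, second-countable) étale groupoid structure on a
topological space `G`.  Multiplication is formalized as a total function whose groupoid
axioms are only imposed on composable pairs (those `(α, β)` with `s α = r β`). -/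
structure EtaleGroupoid (G : Type*) [TopologicalSpace G] where
  unitSpace : Set G
  r : G → G
  s : G → G
  mul : G → G → G
  inv : G → G
  r_mem : ∀ α, r α ∈ unitSpace
  s_mem : ∀ α, s α ∈ unitSpace
  r_unit : ∀ u ∈ unitSpace, r u = u
  s_unit : ∀ u ∈ unitSpace, s u = u
  r_mul : ∀ α β, s α = r β → r (mul α β) = r α
  s_mul : ∀ α β, s α = r β → s (mul α β) = s β
  mul_assoc' : ∀ α β γ, s α = r β → s β = r γ → mul (mul α β) γ = mul α (mul β γ)
  unit_mul : ∀ α, mul (r α) α = α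
  mul_unit : ∀ α, mul α (s α) = α
  r_inv : ∀ α, r (inv α) = s α
  s_inv : ∀ α, s (inv α) = r α
  mul_inv : ∀ α, mul α (inv α) = r α
  inv_mul : ∀ α, mul (inv α) α = s α
  /-- multiplication is continuous on the set of composable pairs -/
  continuousOn_mul : ContinuousOn (fun p : G × G => mul p.1 p.2) {p : G × G | s p.1 = r p.2}
  continuous_inv : Continuous inv
  /-- étale: the range map is a local homeomorphism onto the unit space -/
  isLocalHomeomorph_r : IsLocalHomeomorph fun α => (⟨r α, r_mem α⟩ : unitSpace)
  /-- étale: the source map is a local homeomorphism onto the unit space -/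
  isLocalHomeomorph_s : IsLocalHomeomorph fun α => (⟨s α, s_mem α⟩ : unitSpace)

namespace EtaleGroupoid

variable {G : Type*} [TopologicalSpace G] (𝒢 : EtaleGroupoid G)

/-- A bisection: a set on which both `r` and `s` are injective. -/
def IsBisection (E : Set G) : Prop := Set.InjOn 𝒢.r E ∧ Set.InjOn 𝒢.s E

def IsOpenBisection (E : Set G) : Prop := IsOpen E ∧ 𝒢.IsBisection E

def IsCompactOpenBisection (E : Set G) : Prop := IsCompact E ∧ IsOpen E ∧ 𝒢.IsBisection E

/-- `U` is an open subset of the unit space `G⁰` (in the subspace topology). -/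
def IsUnitOpen (U : Set G) : Prop :=
  U ⊆ 𝒢.unitSpace ∧ ∃ V : Set G, IsOpen V ∧ U = V ∩ 𝒢.unitSpace

/-- `U_E = r(EU) = {r α : α ∈ E, s α ∈ U}`. -/
def ranOn (E U : Set G) : Set G := 𝒢.r '' {α ∈ E | 𝒢.s α ∈ U}

/-- `G` is minimal if every orbit `r(Gu)` is dense in the unit space. -/
def Minimal : Prop :=
  ∀ u ∈ 𝒢.unitSpace, 𝒢.unitSpace ⊆ closure (𝒢.r '' {α | 𝒢.s α = u})

/-- `G` is ample if its topology has a basis of compact open bisections. -/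
def Ample : Prop := ∀ (α : G) (V : Set G), IsOpen V → α ∈ V →
  ∃ E : Set G, 𝒢.IsCompactOpenBisection E ∧ α ∈ E ∧ E ⊆ V

end EtaleGroupoid
namespace EtaleGroupoid

variable {G : Type*} [TopologicalSpace G] (𝒢 : EtaleGroupoid G)

/-- `G` has the `n`-filling property: for all nonempty open `U₁, …, Uₙ ⊆ G⁰` there are
compact open bisections `E₁, …, Eₙ` with `⋃ⱼ r(EⱼUⱼ) = G⁰`. -/
def NFilling (n : ℕ) : Prop :=
  ∀ U : Fin n → Set G, (∀ j, 𝒢.IsUnitOpen (U j) ∧ (U j).Nonempty) →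
    ∃ E : Fin n → Set G, (∀ j, 𝒢.IsCompactOpenBisection (E j)) ∧
      (⋃ j, 𝒢.ranOn (E j) (U j)) = 𝒢.unitSpace

/-- `G` is `n`-filling in Suzuki's sense: for every nonempty open `W ⊆ G⁰` there are
open bisections `E₁, …, Eₙ` with `⋃ᵢ r(EᵢW) = G⁰`. -/
def SuzukiNFilling (n : ℕ) : Prop :=
  ∀ W : Set G, 𝒢.IsUnitOpen W → W.Nonempty →
    ∃ E : Fin n → Set G, (∀ j, 𝒢.IsOpenBisection (E j)) ∧
      (⋃ j, 𝒢.ranOn (E j) W) = 𝒢.unitSpace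

end EtaleGroupoid

/-!
Suzuki's property forces every orbit to meet every nonempty open set of units, i.e. `G` is
minimal. With minimality and ampleness one shrinks `G⁰` to a nonempty open `W` together with
compact open bisections `Fⱼ` such that `W ⊆ s(Fⱼ)` and `r(Fⱼ) ⊆ Uⱼ`. Suzuki's bisections `Eⱼ` for
`W` are cut down, by compactness of `G⁰`, to compact open bisections `Lⱼ` with
`⋃ⱼ r(LⱼW) = G⁰`, and then `Lⱼ Fⱼ⁻¹` are compact open bisections with
`r(LⱼW) ⊆ r((Lⱼ Fⱼ⁻¹) Uⱼ)`.
-/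

namespace EtaleGroupoid

variable {G : Type*} [TopologicalSpace G] (𝒢 : EtaleGroupoid G)

open scoped Topology

lemma inv_inv (α : G) : 𝒢.inv (𝒢.inv α) = α := by
  have hr : 𝒢.r (𝒢.inv (𝒢.inv α)) = 𝒢.r α := by rw [𝒢.r_inv, 𝒢.s_inv]
  calc 𝒢.inv (𝒢.inv α)
      = 𝒢.mul (𝒢.mul α (𝒢.inv α)) (𝒢.inv (𝒢.inv α)) := by
        rw [𝒢.mul_inv, ← hr, 𝒢.unit_mul]
    _ = 𝒢.mul α (𝒢.mul (𝒢.inv α) (𝒢.inv (𝒢.inv α))) :=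
        𝒢.mul_assoc' _ _ _ (𝒢.r_inv α).symm (by rw [𝒢.s_inv, hr])
    _ = α := by rw [𝒢.mul_inv, 𝒢.r_inv, 𝒢.mul_unit]

lemma mul_mul_inv_cancel {α β : G} (h : 𝒢.s α = 𝒢.r β) :
    𝒢.mul (𝒢.mul α β) (𝒢.inv β) = α := by
  rw [𝒢.mul_assoc' _ _ _ h (𝒢.r_inv β).symm, 𝒢.mul_inv, ← h, 𝒢.mul_unit]

lemma mul_inv_mul_cancel {η β : G} (h : 𝒢.s η = 𝒢.s β) :
    𝒢.mul (𝒢.mul η (𝒢.inv β)) β = η := by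
  rw [𝒢.mul_assoc' _ _ _ (by rw [𝒢.r_inv, h]) (𝒢.s_inv β), 𝒢.inv_mul, ← h, 𝒢.mul_unit]

lemma inv_image_eq_preimage (F : Set G) : 𝒢.inv '' F = 𝒢.inv ⁻¹' F :=
  congrFun (image_eq_preimage_of_inverse 𝒢.inv_inv 𝒢.inv_inv) F

def sUnit (α : G) : 𝒢.unitSpace := ⟨𝒢.s α, 𝒢.s_mem α⟩

lemma continuous_sUnit : Continuous 𝒢.sUnit := 𝒢.isLocalHomeomorph_s.continuous

lemma continuous_s : Continuous 𝒢.s := continuous_subtype_val.comp 𝒢.continuous_sUnit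

lemma continuous_r : Continuous 𝒢.r :=
  continuous_subtype_val.comp 𝒢.isLocalHomeomorph_r.continuous

lemma ranOn_subset_unitSpace (E U : Set G) : 𝒢.ranOn E U ⊆ 𝒢.unitSpace := by
  rintro _ ⟨α, -, rfl⟩
  exact 𝒢.r_mem α

section UnitOpen

variable {𝒢}

lemma isUnitOpen_unitSpace : 𝒢.IsUnitOpen 𝒢.unitSpace :=
  ⟨subset_rfl, univ, isOpen_univ, (univ_inter _).symm⟩

lemma isUnitOpen_image_val {T : Set 𝒢.unitSpace} (hT : IsOpen T) :
    𝒢.IsUnitOpen (Subtype.val '' T) := by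
  obtain ⟨V, hV, rfl⟩ := isOpen_induced_iff.1 hT
  exact ⟨Subtype.coe_image_subset _ _, V, hV, by rw [Subtype.image_preimage_coe, inter_comm]⟩

lemma IsUnitOpen.mem_nhdsWithin {U : Set G} (hU : 𝒢.IsUnitOpen U) {x : G} (hx : x ∈ U) :
    U ∈ 𝓝[𝒢.unitSpace] x := by
  obtain ⟨V, hV, rfl⟩ := hU.2
  exact _root_.mem_nhdsWithin.2 ⟨V, hV, hx.1, subset_rfl⟩

variable (𝒢)

lemma isUnitOpen_s_image {D : Set G} (hD : IsOpen D) : 𝒢.IsUnitOpen (𝒢.s '' D) := by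
  simpa only [image_image] using
    isUnitOpen_image_val (𝒢.isLocalHomeomorph_s.isOpenMap D hD)

lemma isUnitOpen_r_image {D : Set G} (hD : IsOpen D) : 𝒢.IsUnitOpen (𝒢.r '' D) := by
  simpa only [image_image] using
    isUnitOpen_image_val (𝒢.isLocalHomeomorph_r.isOpenMap D hD)

end UnitOpen

section Bisections

variable {𝒢}

lemma IsBisection.mono {E F : Set G} (hF : 𝒢.IsBisection F) (hEF : E ⊆ F) :
    𝒢.IsBisection E :=
  ⟨hF.1.mono hEF, hF.2.mono hEF⟩

lemma isCompactOpenBisection_empty : 𝒢.IsCompactOpenBisection ∅ :=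
  ⟨isCompact_empty, isOpen_empty, injOn_empty _, injOn_empty _⟩

lemma isCompactOpenBisection_biUnion {ι : Type*} {t : Finset ι} {K : ι → Set G} {E : Set G}
    (hK : ∀ i ∈ t, 𝒢.IsCompactOpenBisection (K i)) (hE : 𝒢.IsBisection E)
    (hKE : ∀ i ∈ t, K i ⊆ E) : 𝒢.IsCompactOpenBisection (⋃ i ∈ t, K i) :=
  ⟨t.isCompact_biUnion fun i hi => (hK i hi).1, isOpen_biUnion fun i hi => (hK i hi).2.1,
    hE.mono (iUnion₂_subset hKE)⟩

lemma IsCompactOpenBisection.inv_image {F : Set G} (hF : 𝒢.IsCompactOpenBisection F) :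
    𝒢.IsCompactOpenBisection (𝒢.inv '' F) := by
  refine ⟨hF.1.image 𝒢.continuous_inv, ?_, ?_, ?_⟩
  · rw [𝒢.inv_image_eq_preimage]
    exact hF.2.1.preimage 𝒢.continuous_inv
  · rintro _ ⟨β₁, hβ₁, rfl⟩ _ ⟨β₂, hβ₂, rfl⟩ h
    rw [𝒢.r_inv, 𝒢.r_inv] at h
    rw [hF.2.2.2 hβ₁ hβ₂ h]
  · rintro _ ⟨β₁, hβ₁, rfl⟩ _ ⟨β₂, hβ₂, rfl⟩ h
    rw [𝒢.s_inv, 𝒢.s_inv] at h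
    rw [hF.2.2.1 hβ₁ hβ₂ h]

end Bisections

def setMul (A B : Set G) : Set G :=
  (fun p : G × G => 𝒢.mul p.1 p.2) '' (A ×ˢ B ∩ {p | 𝒢.s p.1 = 𝒢.r p.2})

section SetMul

variable {𝒢}

lemma mul_mem_setMul {A B : Set G} {α β : G} (hα : α ∈ A) (hβ : β ∈ B)
    (h : 𝒢.s α = 𝒢.r β) : 𝒢.mul α β ∈ 𝒢.setMul A B :=
  ⟨(α, β), ⟨⟨hα, hβ⟩, h⟩, rfl⟩

lemma isCompact_setMul [T2Space G] {A B : Set G} (hA : IsCompact A) (hB : IsCompact B) :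
    IsCompact (𝒢.setMul A B) := by
  have hcl : IsClosed {p : G × G | 𝒢.s p.1 = 𝒢.r p.2} :=
    isClosed_eq (𝒢.continuous_s.comp continuous_fst) (𝒢.continuous_r.comp continuous_snd)
  exact ((hA.prod hB).inter_right hcl).image_of_continuousOn
    (𝒢.continuousOn_mul.mono inter_subset_right)

lemma mem_setMul {A B : Set G} {x : G} :
    x ∈ 𝒢.setMul A B ↔ ∃ α ∈ A, ∃ β ∈ B, 𝒢.s α = 𝒢.r β ∧ 𝒢.mul α β = x :=
  ⟨fun ⟨⟨α, β⟩, ⟨⟨hα, hβ⟩, h⟩, hx⟩ => ⟨α, hα, β, hβ, h, hx⟩,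
    fun ⟨α, hα, β, hβ, h, hx⟩ => ⟨(α, β), ⟨⟨hα, hβ⟩, h⟩, hx⟩⟩

lemma IsBisection.setMul {A B : Set G} (hA : 𝒢.IsBisection A) (hB : 𝒢.IsBisection B) :
    𝒢.IsBisection (𝒢.setMul A B) := by
  constructor
  · intro x₁ hx₁ x₂ hx₂ hr
    obtain ⟨α₁, hα₁, β₁, hβ₁, h₁, rfl⟩ := mem_setMul.1 hx₁
    obtain ⟨α₂, hα₂, β₂, hβ₂, h₂, rfl⟩ := mem_setMul.1 hx₂
    rw [𝒢.r_mul _ _ h₁, 𝒢.r_mul _ _ h₂] at hr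
    obtain rfl := hA.1 hα₁ hα₂ hr
    rw [hB.1 hβ₁ hβ₂ (h₁.symm.trans h₂)]
  · intro x₁ hx₁ x₂ hx₂ hs
    obtain ⟨α₁, hα₁, β₁, hβ₁, h₁, rfl⟩ := mem_setMul.1 hx₁
    obtain ⟨α₂, hα₂, β₂, hβ₂, h₂, rfl⟩ := mem_setMul.1 hx₂
    rw [𝒢.s_mul _ _ h₁, 𝒢.s_mul _ _ h₂] at hs
    obtain rfl := hB.2 hβ₁ hβ₂ hs
    rw [hA.2 hα₁ hα₂ (h₁.trans h₂.symm)]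

lemma exists_continuousOn_section_s {B : Set G} (hB : IsOpen B) {β₀ : G} (hβ₀ : β₀ ∈ B) :
    ∃ (T : Set 𝒢.unitSpace) (σ : 𝒢.unitSpace → G), IsOpen T ∧ 𝒢.sUnit β₀ ∈ T ∧
      ContinuousOn σ T ∧ σ (𝒢.sUnit β₀) = β₀ ∧ ∀ u ∈ T, σ u ∈ B ∧ 𝒢.sUnit (σ u) = u := by
  obtain ⟨e, hβ₀e, hse⟩ := 𝒢.isLocalHomeomorph_s β₀
  have hs : 𝒢.sUnit = e.restrOpen B hB := hse
  refine ⟨(e.restrOpen B hB).target, (e.restrOpen B hB).symm, (e.restrOpen B hB).open_target,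
    ?_, (e.restrOpen B hB).continuousOn_symm, ?_, fun u hu => ⟨?_, ?_⟩⟩
  · rw [hs]
    exact (e.restrOpen B hB).map_source ⟨hβ₀e, hβ₀⟩
  · rw [hs]
    exact (e.restrOpen B hB).left_inv ⟨hβ₀e, hβ₀⟩
  · exact ((e.restrOpen B hB).map_target hu).2
  · rw [hs]
    exact (e.restrOpen B hB).right_inv hu

/-- Near `α₀ β₀`, every arrow `η` factors as `(η σ(s η)⁻¹) σ(s η)` with `σ` a local section
of `s` into `B`, and the first factor depends continuously on `η`. -/
lemma isOpen_setMul {A B : Set G} (hA : IsOpen A) (hB : IsOpen B) :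
    IsOpen (𝒢.setMul A B) := by
  refine isOpen_iff_forall_mem_open.2 ?_
  rintro _ ⟨⟨α₀, β₀⟩, ⟨⟨hα₀, hβ₀⟩, h₀⟩, rfl⟩
  obtain ⟨T, σ, hT, hβ₀T, hσc, hσβ₀, hσ⟩ := exists_continuousOn_section_s hB hβ₀
  set O := 𝒢.sUnit ⁻¹' T
  set b : G → G := fun η => σ (𝒢.sUnit η)
  have hb : ∀ η ∈ O, b η ∈ B ∧ 𝒢.s (b η) = 𝒢.s η := fun η hη =>
    ⟨(hσ _ hη).1, congrArg Subtype.val (hσ _ hη).2⟩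
  have hcomp : ∀ η ∈ O, 𝒢.s η = 𝒢.r (𝒢.inv (b η)) := fun η hη => by
    rw [𝒢.r_inv, (hb η hη).2]
  have hgc : ContinuousOn (fun η => 𝒢.mul η (𝒢.inv (b η))) O :=
    𝒢.continuousOn_mul.comp (continuousOn_id.prodMk (𝒢.continuous_inv.comp_continuousOn
      (hσc.comp 𝒢.continuous_sUnit.continuousOn fun _ h => h))) hcomp
  have hsx₀ : 𝒢.sUnit (𝒢.mul α₀ β₀) = 𝒢.sUnit β₀ := Subtype.ext (𝒢.s_mul _ _ h₀)
  refine ⟨O ∩ (fun η => 𝒢.mul η (𝒢.inv (b η))) ⁻¹' A, ?_,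
    hgc.isOpen_inter_preimage (hT.preimage 𝒢.continuous_sUnit) hA, ?_⟩
  · rintro η ⟨hηO, hηA⟩
    have hη : η = 𝒢.mul (𝒢.mul η (𝒢.inv (b η))) (b η) :=
      (𝒢.mul_inv_mul_cancel (hb η hηO).2.symm).symm
    rw [hη]
    refine mul_mem_setMul hηA (hb η hηO).1 ?_
    rw [𝒢.s_mul _ _ (hcomp η hηO), 𝒢.s_inv]
  · have hbx₀ : b (𝒢.mul α₀ β₀) = β₀ := by simp only [b, hsx₀, hσβ₀]
    refine ⟨show 𝒢.sUnit _ ∈ T by rw [hsx₀]; exact hβ₀T, ?_⟩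
    simp only [mem_preimage, hbx₀, 𝒢.mul_mul_inv_cancel h₀, hα₀]

lemma IsCompactOpenBisection.setMul [T2Space G] {A B : Set G}
    (hA : 𝒢.IsCompactOpenBisection A) (hB : 𝒢.IsCompactOpenBisection B) :
    𝒢.IsCompactOpenBisection (𝒢.setMul A B) :=
  ⟨isCompact_setMul hA.1 hB.1, isOpen_setMul hA.2.1 hB.2.1, hA.2.2.setMul hB.2.2⟩

lemma ranOn_subset_ranOn_setMul_inv {L F W U : Set G} (hW : W ⊆ 𝒢.s '' F)
    (hU : 𝒢.r '' F ⊆ U) : 𝒢.ranOn L W ⊆ 𝒢.ranOn (𝒢.setMul L (𝒢.inv '' F)) U := by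
  rintro _ ⟨α, ⟨hαL, hαW⟩, rfl⟩
  obtain ⟨β, hβF, hβα⟩ := hW hαW
  have h : 𝒢.s α = 𝒢.r (𝒢.inv β) := by rw [𝒢.r_inv, hβα]
  refine ⟨𝒢.mul α (𝒢.inv β), ⟨mul_mem_setMul hαL ⟨β, hβF, rfl⟩ h, ?_⟩, 𝒢.r_mul _ _ h⟩
  rw [𝒢.s_mul _ _ h, 𝒢.s_inv]
  exact hU ⟨β, hβF, rfl⟩

end SetMul

section Filling

variable {𝒢}

lemma Minimal.exists_s_mem_r_eq (hmin : 𝒢.Minimal) {W : Set G} (hW : 𝒢.IsUnitOpen W)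
    (hWne : W.Nonempty) {u : G} (hu : u ∈ 𝒢.unitSpace) : ∃ α, 𝒢.s α ∈ W ∧ 𝒢.r α = u := by
  obtain ⟨w, hw⟩ := hWne
  obtain ⟨V, hV, rfl⟩ := hW.2
  obtain ⟨_, hγV, γ, rfl, rfl⟩ := mem_closure_iff.1 (hmin u hu (hW.1 hw)) V hV hw.1
  exact ⟨𝒢.inv γ, by rw [𝒢.s_inv]; exact ⟨hγV, 𝒢.r_mem γ⟩, 𝒢.r_inv γ⟩

lemma SuzukiNFilling.minimal {n : ℕ} (hs : 𝒢.SuzukiNFilling n) : 𝒢.Minimal := by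
  intro u hu v hv
  refine mem_closure_iff.2 fun V hV hvV => ?_
  obtain ⟨E, -, hcov⟩ := hs (V ∩ 𝒢.unitSpace) ⟨inter_subset_right, V, hV, rfl⟩ ⟨v, hvV, hv⟩
  obtain ⟨-, ⟨j, rfl⟩, β, ⟨-, hβV⟩, rfl⟩ := (hcov ▸ hu : u ∈ ⋃ j, 𝒢.ranOn (E j) _)
  exact ⟨𝒢.s β, hβV.1, 𝒢.inv β, 𝒢.s_inv β, 𝒢.r_inv β⟩

lemma Ample.exists_isCompactOpenBisection_mem_subset (hample : 𝒢.Ample) {O W : Set G}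
    (hO : IsOpen O) (hW : 𝒢.IsUnitOpen W) {α : G} (hαO : α ∈ O) (hαW : 𝒢.s α ∈ W) :
    ∃ K, 𝒢.IsCompactOpenBisection K ∧ α ∈ K ∧ K ⊆ O ∧ 𝒢.s '' K ⊆ W := by
  obtain ⟨V, hV, rfl⟩ := hW.2
  obtain ⟨K, hK, hαK, hKO⟩ :=
    hample α _ (hO.inter (hV.preimage 𝒢.continuous_s)) ⟨hαO, hαW.1⟩
  exact ⟨K, hK, hαK, fun β hβ => (hKO hβ).1,
    by rintro _ ⟨β, hβ, rfl⟩; exact ⟨(hKO hβ).2, 𝒢.s_mem β⟩⟩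

lemma Ample.exists_isCompactOpenBisection_s_image_subset_r_image_subset (hample : 𝒢.Ample)
    (hmin : 𝒢.Minimal) {W U : Set G} (hW : 𝒢.IsUnitOpen W) (hWne : W.Nonempty)
    (hU : 𝒢.IsUnitOpen U) (hUne : U.Nonempty) :
    ∃ F, 𝒢.IsCompactOpenBisection F ∧ F.Nonempty ∧ 𝒢.s '' F ⊆ W ∧ 𝒢.r '' F ⊆ U := by
  obtain ⟨u, hu⟩ := hUne
  obtain ⟨α, hαW, hαu⟩ := hmin.exists_s_mem_r_eq hW hWne (hU.1 hu)
  obtain ⟨V, hV, rfl⟩ := hU.2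
  obtain ⟨F, hF, hαF, hFV, hFW⟩ := hample.exists_isCompactOpenBisection_mem_subset
    (hV.preimage 𝒢.continuous_r) hW (show 𝒢.r α ∈ V from hαu ▸ hu.1) hαW
  exact ⟨F, hF, ⟨α, hαF⟩, hFW, by rintro _ ⟨β, hβ, rfl⟩; exact ⟨hFV hβ, 𝒢.r_mem β⟩⟩

/-- Shrink `W` once for each `U j`, through the source of a compact open bisection landing
in `U j`. -/
lemma Ample.exists_isUnitOpen_forall_isCompactOpenBisection (hample : 𝒢.Ample) (hmin : 𝒢.Minimal)
    {W : Set G} (hW : 𝒢.IsUnitOpen W) (hWne : W.Nonempty) :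
    ∀ {n : ℕ} (U : Fin n → Set G), (∀ j, 𝒢.IsUnitOpen (U j) ∧ (U j).Nonempty) →
      ∃ W' : Set G, 𝒢.IsUnitOpen W' ∧ W'.Nonempty ∧ ∀ j, ∃ F,
        𝒢.IsCompactOpenBisection F ∧ W' ⊆ 𝒢.s '' F ∧ 𝒢.r '' F ⊆ U j
  | 0, _, _ => ⟨W, hW, hWne, fun j => j.elim0⟩
  | n + 1, U, hU => by
    obtain ⟨W', hW', hW'ne, hF⟩ :=
      hample.exists_isUnitOpen_forall_isCompactOpenBisection hmin hW hWne (U ∘ Fin.succ)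
        fun j => hU j.succ
    obtain ⟨F₀, hF₀, hF₀ne, hF₀W', hF₀U⟩ :=
      hample.exists_isCompactOpenBisection_s_image_subset_r_image_subset hmin hW' hW'ne
        (hU 0).1 (hU 0).2
    refine ⟨𝒢.s '' F₀, 𝒢.isUnitOpen_s_image hF₀.2.1, hF₀ne.image _, Fin.cases ?_ fun j => ?_⟩
    · exact ⟨F₀, hF₀, subset_rfl, hF₀U⟩
    · obtain ⟨F, hF, hW'F, hFU⟩ := hF j
      exact ⟨F, hF, hF₀W'.trans hW'F, hFU⟩

lemma Ample.exists_isCompactOpenBisection_cover (hample : 𝒢.Ample)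
    (hcompact : IsCompact 𝒢.unitSpace) {n : ℕ} {E : Fin n → Set G} (hE : ∀ j, 𝒢.IsOpenBisection (E j)) {W : Set G}
    (hW : 𝒢.IsUnitOpen W) (hcov : 𝒢.unitSpace ⊆ ⋃ j, 𝒢.ranOn (E j) W) :
    ∃ L : Fin n → Set G, (∀ j, 𝒢.IsCompactOpenBisection (L j)) ∧
      𝒢.unitSpace ⊆ ⋃ j, 𝒢.ranOn (L j) W := by
  have hloc : ∀ u : 𝒢.unitSpace, ∃ j K, 𝒢.IsCompactOpenBisection K ∧ K ⊆ E j ∧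
      𝒢.s '' K ⊆ W ∧ (u : G) ∈ 𝒢.r '' K := by
    intro u
    obtain ⟨j, α, ⟨hαE, hαW⟩, hαu⟩ := mem_iUnion.1 (hcov u.2)
    obtain ⟨K, hK, hαK, hKE, hKW⟩ :=
      hample.exists_isCompactOpenBisection_mem_subset (hE j).1 hW hαE hαW
    exact ⟨j, K, hK, hKE, hKW, α, hαK, hαu⟩
  choose j K hK hKE hKW huK using hloc
  obtain ⟨t, htcov⟩ := hcompact.elim_nhdsWithin_subcover' (fun u hu => 𝒢.r '' K ⟨u, hu⟩)
    fun u hu => (𝒢.isUnitOpen_r_image (hK _).2.1).mem_nhdsWithin (huK _)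
  refine ⟨fun i => ⋃ u ∈ t.filter (j · = i), K u, fun i => ?_, fun x hx => ?_⟩
  · refine isCompactOpenBisection_biUnion (fun u _ => hK u) (hE i).2 fun u hu => ?_
    rw [← (Finset.mem_filter.1 hu).2]
    exact hKE u
  · obtain ⟨u, hut, α, hαK, rfl⟩ := mem_iUnion₂.1 (htcov hx)
    exact mem_iUnion.2 ⟨j u, α, ⟨mem_biUnion (Finset.mem_filter.2 ⟨hut, rfl⟩) hαK,
      hKW u ⟨α, hαK, rfl⟩⟩, rfl⟩

end Filling

end EtaleGroupoid

theorem nFilling_iff_suzuki_general {G : Type*} [TopologicalSpace G] [T2Space G]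
    (𝒢 : EtaleGroupoid G) (hample : 𝒢.Ample) (hcompact : IsCompact 𝒢.unitSpace)
    (n : ℕ) :
    𝒢.NFilling n ↔ 𝒢.SuzukiNFilling n := by
  refine ⟨fun h W hW hWne => ?_, fun hs U hU => ?_⟩
  · obtain ⟨E, hE, hcov⟩ := h (fun _ => W) fun _ => ⟨hW, hWne⟩
    exact ⟨E, fun j => (hE j).2, hcov⟩
  rcases 𝒢.unitSpace.eq_empty_or_nonempty with hempty | hne
  · exact ⟨fun _ => ∅, fun _ => EtaleGroupoid.isCompactOpenBisection_empty,
      by simp [EtaleGroupoid.ranOn, hempty]⟩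
  obtain ⟨W, hW, hWne, hF⟩ := hample.exists_isUnitOpen_forall_isCompactOpenBisection
    hs.minimal EtaleGroupoid.isUnitOpen_unitSpace hne U hU
  choose F hF hWF hFU using hF
  obtain ⟨E, hE, hcov⟩ := hs W hW hWne
  obtain ⟨L, hL, hLcov⟩ := hample.exists_isCompactOpenBisection_cover hcompact hE hW hcov.ge
  refine ⟨fun j => 𝒢.setMul (L j) (𝒢.inv '' F j), fun j => (hL j).setMul (hF j).inv_image,
    (iUnion_subset fun j => 𝒢.ranOn_subset_unitSpace _ _).antisymm ?_⟩
  exact hLcov.trans (iUnion_mono fun j => 𝒢.ranOn_subset_ranOn_setMul_inv (hWF j) (hFU j))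

/-- **Statement 16.** For an ample étale groupoid `G` with compact unit space and
`n ∈ ℕ`, `G` has the `n`-filling property if and only if `G` is `n`-filling in
Suzuki's sense. -/
theorem nFilling_iff_suzuki {G : Type*} [TopologicalSpace G]
    [LocallyCompactSpace G] [T2Space G] [SecondCountableTopology G]
    (𝒢 : EtaleGroupoid G) (hample : 𝒢.Ample) (hcompact : IsCompact 𝒢.unitSpace)
    (n : ℕ) :
    𝒢.NFilling n ↔ 𝒢.SuzukiNFilling n :=
  nFilling_iff_suzuki_general 𝒢 hample hcompact n
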